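/- arXiv:2208.14758 — 3 statements merged into one kernel-verified Lean document; each statement's English description precedes it below -/
import Mathlib

section
/- Let Γ be a countable group. Then the set Boom(Γ) of boomerang subgroups of Γ is a G_δ subset of Sub(Γ) with respect to the Chabauty topology. In particular, Boom(Γ) is Borel measurable. -/
/-- The conjugation action of `γ` on subgroups: `Δ ↦ γ Δ γ⁻¹`. -/
def conjSubgroup {Γ : Type*} [Group Γ] (γ : Γ) (Δ : Subgroup Γ) : Subgroup Γ :=
  Subgroup.map (MulAut.conj γ).toMonoidHom Δ

/-- The Chabauty topology on `Subgroup Γ`: induced from the product of discrete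
topologies on `Γ → Prop` via the membership indicator. -/
def chabautyTopology (Γ : Type*) [Group Γ] : TopologicalSpace (Subgroup Γ) :=
  TopologicalSpace.induced (fun (Δ : Subgroup Γ) (g : Γ) => g ∈ Δ)
    (@Pi.topologicalSpace Γ (fun _ => Prop) (fun _ => ⊥))

/-- `γ` is a recurrent direction for `Δ`: every Chabauty-open neighbourhood `O` of `Δ`
contains `γ^n Δ γ^{-n}` for some `n ≥ 1`. -/
def IsRecurrentDirection {Γ : Type*} [Group Γ] (γ : Γ) (Δ : Subgroup Γ) : Prop :=
  ∀ O : Set (Subgroup Γ), (chabautyTopology Γ).IsOpen O → Δ ∈ O →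
    ∃ n : ℕ, 1 ≤ n ∧ conjSubgroup (γ ^ n) Δ ∈ O

/-- `Δ` is a boomerang subgroup if every `γ` is a recurrent direction for it. -/
def IsBoomerang {Γ : Type*} [Group Γ] (Δ : Subgroup Γ) : Prop :=
  ∀ γ : Γ, IsRecurrentDirection γ Δ

section Aux

variable {Γ : Type*} [Group Γ]

lemma mem_conjSubgroup {γ g : Γ} {Δ : Subgroup Γ} :
    g ∈ conjSubgroup γ Δ ↔ γ⁻¹ * g * γ ∈ Δ := by
  simp only [conjSubgroup, Subgroup.mem_map, MulEquiv.coe_toMonoidHom, MulAut.conj_apply]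
  constructor
  · rintro ⟨x, hx, rfl⟩
    have h : γ⁻¹ * (γ * x * γ⁻¹) * γ = x := by group
    rw [h]; exact hx
  · intro h; exact ⟨γ⁻¹ * g * γ, h, by group⟩

/-- Basic clopen set of the Chabauty topology. -/
def basicSet (Fp Fm : Finset Γ) : Set (Subgroup Γ) :=
  {Δ | (∀ g ∈ Fp, g ∈ Δ) ∧ (∀ g ∈ Fm, g ∉ Δ)}

lemma chab_clopen (Fp Fm : Finset Γ) :
    @IsOpen _ (chabautyTopology Γ) (basicSet Fp Fm) ∧
      @IsOpen _ (chabautyTopology Γ) (basicSet Fp Fm)ᶜ := by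
  letI : TopologicalSpace Prop := ⊥
  haveI : DiscreteTopology Prop := ⟨rfl⟩
  letI := chabautyTopology Γ
  have hcont : Continuous (fun (Δ : Subgroup Γ) (g : Γ) => (g ∈ Δ : Prop)) :=
    continuous_induced_dom
  have hmem : ∀ g : Γ, IsOpen {Δ : Subgroup Γ | g ∈ Δ} := by
    intro g
    have : Continuous (fun Δ : Subgroup Γ => (g ∈ Δ : Prop)) :=
      (continuous_apply g).comp hcont
    exact this.isOpen_preimage {p : Prop | p} (isOpen_discrete _)
  have hmem' : ∀ g : Γ, IsOpen {Δ : Subgroup Γ | g ∉ Δ} := by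
    intro g
    have : Continuous (fun Δ : Subgroup Γ => (g ∈ Δ : Prop)) :=
      (continuous_apply g).comp hcont
    exact this.isOpen_preimage {p : Prop | ¬ p} (isOpen_discrete _)
  constructor
  · have h : basicSet Fp Fm =
        (⋂ g ∈ Fp, {Δ : Subgroup Γ | g ∈ Δ}) ∩ ⋂ g ∈ Fm, {Δ : Subgroup Γ | g ∉ Δ} := by
      ext Δ; simp [basicSet]
    rw [h]
    exact (isOpen_biInter_finset fun g _ => hmem g).inter
      (isOpen_biInter_finset fun g _ => hmem' g)
  · have h : (basicSet Fp Fm)ᶜ =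
        (⋃ g ∈ Fp, {Δ : Subgroup Γ | g ∉ Δ}) ∪ ⋃ g ∈ Fm, {Δ : Subgroup Γ | g ∈ Δ} := by
      ext Δ
      constructor
      · intro h
        by_cases h1 : ∀ g ∈ Fp, g ∈ Δ
        · have h2 : ¬ ∀ g ∈ Fm, g ∉ Δ := fun h2 => h ⟨h1, h2⟩
          push_neg at h2
          obtain ⟨g, hg, hgΔ⟩ := h2
          exact Or.inr (Set.mem_iUnion₂.2 ⟨g, hg, hgΔ⟩)
        · push_neg at h1
          obtain ⟨g, hg, hgΔ⟩ := h1
          exact Or.inl (Set.mem_iUnion₂.2 ⟨g, hg, hgΔ⟩)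
      · rintro (h | h) ⟨h1, h2⟩ <;> obtain ⟨g, hg, hgΔ⟩ := Set.mem_iUnion₂.1 h
        · exact hgΔ (h1 g hg)
        · exact h2 g hg hgΔ
    rw [h]
    exact (isOpen_biUnion fun g _ => hmem' g).union (isOpen_biUnion fun g _ => hmem g)

lemma conjPre_eq [DecidableEq Γ] (γ' : Γ) (Fp Fm : Finset Γ) :
    {Δ : Subgroup Γ | conjSubgroup γ' Δ ∈ basicSet Fp Fm} =
      basicSet (Fp.image fun g => γ'⁻¹ * g * γ') (Fm.image fun g => γ'⁻¹ * g * γ') := by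
  ext Δ
  simp only [basicSet, Set.mem_setOf_eq, mem_conjSubgroup, Finset.mem_image]
  aesop

end Aux

theorem boomerang_isGdelta_and_measurable {Γ : Type*} [Group Γ] [Countable Γ] :
    @IsGδ (Subgroup Γ) (chabautyTopology Γ) {Δ : Subgroup Γ | IsBoomerang Δ} ∧
      @MeasurableSet (Subgroup Γ) (@borel (Subgroup Γ) (chabautyTopology Γ))
        {Δ : Subgroup Γ | IsBoomerang Δ} := by
  classical
  letI : TopologicalSpace Prop := ⊥
  haveI : DiscreteTopology Prop := ⟨rfl⟩
  letI := chabautyTopology Γ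
  set T : Γ × Finset Γ × Finset Γ → Set (Subgroup Γ) := fun i =>
    (basicSet i.2.1 i.2.2)ᶜ ∪
      ⋃ n : ℕ, ⋃ _ : 1 ≤ n, {Δ : Subgroup Γ | conjSubgroup (i.1 ^ n) Δ ∈ basicSet i.2.1 i.2.2}
    with hT
  have hTopen : ∀ i, IsOpen (T i) := by
    rintro ⟨γ, Fp, Fm⟩
    refine ((chab_clopen Fp Fm).2).union (isOpen_iUnion fun n => isOpen_iUnion fun _ => ?_)
    rw [conjPre_eq]
    exact (chab_clopen _ _).1
  have hEq : {Δ : Subgroup Γ | IsBoomerang Δ} = ⋂ i, T i := by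
    ext Δ
    simp only [Set.mem_setOf_eq, Set.mem_iInter]
    constructor
    · rintro hB ⟨γ, Fp, Fm⟩
      by_cases hΔ : Δ ∈ basicSet Fp Fm
      · obtain ⟨n, hn, hmem⟩ := hB γ (basicSet Fp Fm) (chab_clopen Fp Fm).1 hΔ
        exact Or.inr (Set.mem_iUnion.2 ⟨n, Set.mem_iUnion.2 ⟨hn, hmem⟩⟩)
      · exact Or.inl hΔ
    · intro h γ O hO hΔO
      obtain ⟨U, hU, rfl⟩ := isOpen_induced_iff.1 hO
      obtain ⟨I, u, hu, hsub⟩ := isOpen_pi_iff.1 hU _ hΔO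
      set Fp : Finset Γ := I.filter (fun g => g ∈ Δ) with hFp
      set Fm : Finset Γ := I.filter (fun g => g ∉ Δ) with hFm
      have hbsub : basicSet Fp Fm ⊆
          (fun (Δ : Subgroup Γ) (g : Γ) => (g ∈ Δ : Prop)) ⁻¹' U := by
        intro Δ' hΔ'
        apply hsub
        intro g hg
        rw [Finset.mem_coe] at hg
        have he : ((g ∈ Δ' : Prop)) = ((g ∈ Δ : Prop)) := by
          by_cases hgΔ : g ∈ Δ
          · have hgF : g ∈ Fp := Finset.mem_filter.2 ⟨hg, hgΔ⟩
            exact propext ⟨fun _ => hgΔ, fun _ => hΔ'.1 g hgF⟩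
          · have hgF : g ∈ Fm := Finset.mem_filter.2 ⟨hg, hgΔ⟩
            exact propext ⟨fun h' => absurd h' (hΔ'.2 g hgF), fun h' => absurd h' hgΔ⟩
        show (g ∈ Δ' : Prop) ∈ u g
        rw [he]
        exact (hu g hg).2
      have hΔb : Δ ∈ basicSet Fp Fm :=
        ⟨fun g hg => (Finset.mem_filter.1 hg).2, fun g hg => (Finset.mem_filter.1 hg).2⟩
      rcases h (γ, Fp, Fm) with h' | h'
      · exact absurd hΔb h'
      · simp only [Set.mem_iUnion] at h'
        obtain ⟨n, hn, hmem⟩ := h'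
        exact ⟨n, hn, hbsub hmem⟩
  have hGδ : IsGδ {Δ : Subgroup Γ | IsBoomerang Δ} := by
    rw [hEq]
    exact .iInter fun i => (hTopen i).isGδ
  refine ⟨hGδ, ?_⟩
  rw [hEq]
  exact MeasurableSet.iInter fun i =>
    MeasurableSpace.measurableSet_generateFrom (hTopen i)
end

section
/- Let n ≥ 2 and let Δ be a boomerang subgroup of SL_n(ℤ) that is not contained in the center {±I}. Then there exist a permutation σ of {1,…,n} with σ(1) ≠ 1, an element δ ∈ Δ, and invertible upper triangular matrices b₁, b₂ ∈ GL_n(ℚ) such that δ = b₁ · P_σ · b₂, where P_σ is the permutation matrix of σ (the matrix sending the j-th standard basis vector to the σ(j)-th). -/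
/-!
If every element of `Δ` fixed the line `ℚ e₀`, then so would `γ⁻ᵏ δ γᵏ` for the transvection
`γ : e₀ ↦ e₀ + 3 e_j` and the `k ≥ 1` supplied by the boomerang property. Comparing the images of
`e₀` shows that `δ e_j = ± e_j` with the same sign as `δ e₀ = ± e₀`, because `3k` cannot divide
`±2`; so `δ = ±1`. Hence a non-central `Δ` contains some `δ` with a nonzero entry `δ i 0`, `i ≠ 0`.

Over `ℚ` such a `δ` has a Bruhat decomposition `δ = b₁ P_σ b₂`, obtained by repeatedly isolating
the lowest nonzero entry of the leftmost unfinished column with upper triangular row and column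
operations. Column `0` of `b₁ P_σ b₂` is `(b₂)₀₀` times column `σ 0` of `b₁`, which vanishes below
row `σ 0`; hence `σ 0 ≠ 0`.
-/

theorem isOpen_setOf_mem_chabauty {Γ : Type*} [Group Γ] (g : Γ) :
    (chabautyTopology Γ).IsOpen {Δ : Subgroup Γ | g ∈ Δ} :=
  letI : TopologicalSpace Prop := ⊥
  have : DiscreteTopology Prop := ⟨rfl⟩
  ⟨(fun f : Γ → Prop => f g) ⁻¹' {p | p},
    (continuous_apply g).isOpen_preimage _ (isOpen_discrete _), rfl⟩

theorem IsBoomerang.exists_conj_pow_mem {Γ : Type*} [Group Γ] {Δ : Subgroup Γ}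
    (hΔ : IsBoomerang Δ) (γ : Γ) {δ : Γ} (hδ : δ ∈ Δ) :
    ∃ k : ℕ, 1 ≤ k ∧ (γ ^ k)⁻¹ * δ * γ ^ k ∈ Δ := by
  obtain ⟨k, hk, hmem⟩ := hΔ γ _ (isOpen_setOf_mem_chabauty δ) hδ
  rw [Set.mem_ofPred_eq, conjSubgroup, Subgroup.mem_map_equiv, MulAut.conj_symm_apply] at hmem
  exact ⟨k, hk, hmem⟩

namespace Matrix.SpecialLinearGroup

theorem transvection_pow {ι F : Type*} [Fintype ι] [DecidableEq ι]
    [CommRing F] {i j : ι} (hij : i ≠ j) (b : F) (k : ℕ) :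
    transvection hij b ^ k = transvection hij (k * b) := by
  induction k with
  | zero => simp
  | succ k ih => rw [pow_succ, ih, ← transvection_add, Nat.cast_succ, add_one_mul]

variable {m : Type*} [Fintype m] [DecidableEq m] {Δ : Subgroup (SpecialLinearGroup m ℤ)} {z : m}

theorem apply_self_eq_one_or_neg_one (δ : SpecialLinearGroup m ℤ)
    (hδ : ∀ i, i ≠ z → δ i z = 0) : δ z z = 1 ∨ δ z z = -1 := by
  have h : ((δ⁻¹ : SpecialLinearGroup m ℤ) : Matrix m m ℤ) * δ = 1 := by
    rw [← SpecialLinearGroup.coe_mul, inv_mul_cancel, SpecialLinearGroup.coe_one]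
  replace h := congr_fun₂ h z z
  rw [mul_apply, Finset.sum_eq_single z (fun i _ hi => by rw [hδ i hi, mul_zero]) (by simp)]
    at h
  exact (Int.eq_one_or_neg_one_of_mul_eq_one' (by simpa using h)).imp And.right And.right

theorem apply_eq_ite_of_isBoomerang (hΔ : IsBoomerang Δ)
    (hcol : ∀ δ ∈ Δ, ∀ i, i ≠ z → δ i z = 0) {δ : SpecialLinearGroup m ℤ} (hδ : δ ∈ Δ) {j : m}
    (hj : j ≠ z) (a : m) : δ a j = if a = j then δ z z else 0 := by
  obtain ⟨k, hk, hδ'⟩ := hΔ.exists_conj_pow_mem (transvection hj (3 : ℤ)) hδ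
  set δ' := (transvection hj (3 : ℤ) ^ k)⁻¹ * δ * transvection hj (3 : ℤ) ^ k
  set c : ℤ := k * 3
  have hc : c ≠ 0 := by omega
  have hcomm : (δ : Matrix m m ℤ) * (1 + single j z c) = (1 + single j z c) * δ' := by
    rw [← transvection_coe hj, ← transvection_pow, ← SpecialLinearGroup.coe_mul,
      ← SpecialLinearGroup.coe_mul]
    simp [δ', mul_assoc]
  -- `c = 3k` cannot divide `δ' z z - δ z z ∈ {0, ±2}` unless it is `0`
  obtain ⟨hzjk, hε⟩ : δ z j * k = 0 ∧ δ' z z = δ z z := by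
    have h := congr_fun₂ hcomm z z
    simp [mul_add, add_mul, hj.symm] at h
    have hmul : δ z j * c = 3 * (δ z j * k) := by ring
    rcases apply_self_eq_one_or_neg_one δ (hcol δ hδ) with h₁ | h₁ <;>
    rcases apply_self_eq_one_or_neg_one δ' (hcol δ' hδ') with h₂ | h₂ <;> omega
  have hjj : δ j j = δ z z := by
    have h := congr_fun₂ hcomm j z
    simp [mul_add, add_mul, hcol δ hδ j hj, hcol δ' hδ' j hj, hε] at h
    exact mul_right_cancel₀ hc (h.trans (mul_comm _ _))
  split_ifs with haj
  · rw [haj, hjj]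
  obtain rfl | haz := eq_or_ne a z
  · exact (mul_eq_zero.mp hzjk).resolve_right (by omega)
  · have h := congr_fun₂ hcomm a z
    simpa [mul_add, add_mul, hcol δ hδ a haz, hcol δ' hδ' a haz, haj, hc] using h

theorem coe_eq_one_or_neg_one_of_isBoomerang (hΔ : IsBoomerang Δ)
    (hcol : ∀ δ ∈ Δ, ∀ i, i ≠ z → δ i z = 0) {δ : SpecialLinearGroup m ℤ} (hδ : δ ∈ Δ) :
    (δ : Matrix m m ℤ) = 1 ∨ (δ : Matrix m m ℤ) = -1 := by
  have hscalar : (δ : Matrix m m ℤ) = δ z z • 1 := by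
    ext a b
    obtain rfl | hb := eq_or_ne b z
    · obtain rfl | hab := eq_or_ne a b
      · simp
      · simp [hcol δ hδ a hab, hab]
    · simp [apply_eq_ite_of_isBoomerang hΔ hcol hδ hb a, one_apply]
  rcases apply_self_eq_one_or_neg_one δ (hcol δ hδ) with h | h
  · left
    rw [hscalar, h, one_smul]
  · right
    rw [hscalar, h, neg_one_smul]

theorem exists_mem_apply_ne_zero_of_isBoomerang (hΔ : IsBoomerang Δ)
    (hnc : ¬ ∀ δ ∈ Δ, (δ : Matrix m m ℤ) = 1 ∨ (δ : Matrix m m ℤ) = -1) (z : m) :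
    ∃ δ ∈ Δ, ∃ i, i ≠ z ∧ δ i z ≠ 0 := by
  by_contra! h
  exact hnc fun δ hδ => coe_eq_one_or_neg_one_of_isBoomerang hΔ h hδ

end Matrix.SpecialLinearGroup

namespace Matrix

section IsolatedEntry

variable {m n R : Type*}

def IsIsolatedEntry [Zero R] (N : Matrix m n R) (p : m) (j : n) : Prop :=
  N p j ≠ 0 ∧ (∀ i, i ≠ p → N i j = 0) ∧ ∀ c, c ≠ j → N p c = 0

theorem IsIsolatedEntry.sub_vecMulVec [NonUnitalNonAssocRing R] {N : Matrix m n R} {p : m}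
    {j : n} (h : N.IsIsolatedEntry p j) {x : m → R} {y : n → R} (hx : x p = 0) (hy : y j = 0) :
    (N - vecMulVec x y).IsIsolatedEntry p j := by
  obtain ⟨hpj, hcol, hrow⟩ := h
  refine ⟨?_, fun i hi => ?_, fun c hc => ?_⟩
  · simpa [vecMulVec_apply, hx] using hpj
  · simp [vecMulVec_apply, hy, hcol i hi]
  · simp [vecMulVec_apply, hx, hrow c hc]

end IsolatedEntry

section UpperTriangular

variable {ι R : Type*} [Ring R]

theorem isUnit_one_sub_vecMulVec [Fintype ι] [DecidableEq ι] {x y : ι → R} (h : y ⬝ᵥ x = 0) :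
    IsUnit (1 - vecMulVec x y) :=
  IsNilpotent.isUnit_one_sub ⟨2, by
    rw [pow_two, vecMulVec_mul_vecMulVec, h, zero_smul]
    ext
    simp [vecMulVec_apply]⟩

theorem isUpperTriangular_one_sub_vecMulVec [LinearOrder ι] {x y : ι → R}
    (h : ∀ i k, k < i → x i * y k = 0) : (1 - vecMulVec x y).IsUpperTriangular := by
  intro i k hki
  simp [vecMulVec_apply, one_apply_ne (ne_of_gt (show k < i from hki)), h i k hki]

end UpperTriangular

section Bruhat

variable {ι R K : Type*} [Fintype ι] [LinearOrder ι] [Field K]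

theorem exists_isIsolatedEntry_mul_mul (N : Matrix ι ι K) {p j : ι} (hpj : N p j ≠ 0)
    (hbelow : ∀ i, p < i → N i j = 0) (hleft : ∀ c, c < j → N p c = 0) :
    ∃ w v : Matrix ι ι K, w.IsUpperTriangular ∧ v.IsUpperTriangular ∧ IsUnit w ∧ IsUnit v ∧
      (w * N * v).IsIsolatedEntry p j ∧
      ∀ p' j', j' ≠ j → N.IsIsolatedEntry p' j' → (w * N * v).IsIsolatedEntry p' j' := by
  set y : ι → K := fun c => if j < c then N p c / N p j else 0
  set x : ι → K := fun i => if i < p then N i j / N p j else 0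
  set N₁ := N - vecMulVec (N.col j) y
  set N₂ := N₁ - vecMulVec x (N₁.row p)
  -- column operations clear row `p` right of `j`, then row operations clear column `j` above `p`
  have hN₂ : (1 - vecMulVec x (Pi.single p 1)) * N * (1 - vecMulVec (Pi.single j 1) y) = N₂ := by
    rw [mul_assoc, mul_sub N, mul_one, mul_vecMulVec, mulVec_single_one, sub_mul, one_mul,
      vecMulVec_mul, single_one_vecMul]
  have hN₁col : ∀ i, N₁ i j = N i j := by simp [N₁, vecMulVec_apply, y]
  have hN₁row : ∀ c, c ≠ j → N₁ p c = 0 := by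
    intro c hc
    rcases hc.lt_or_gt with h | h
    · simp [N₁, vecMulVec_apply, y, hleft c h, not_lt.mpr h.le]
    · simp [N₁, vecMulVec_apply, y, h, mul_div_cancel₀ _ hpj]
  refine ⟨1 - vecMulVec x (Pi.single p 1), 1 - vecMulVec (Pi.single j 1) y,
    isUpperTriangular_one_sub_vecMulVec fun i k hki => ?_,
    isUpperTriangular_one_sub_vecMulVec fun i k hki => ?_,
    isUnit_one_sub_vecMulVec ?_, isUnit_one_sub_vecMulVec ?_, ?_, ?_⟩
  · rcases eq_or_ne k p with rfl | hk
    · simp [x, not_lt.mpr hki.le]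
    · simp [hk]
  · rcases eq_or_ne i j with rfl | hi
    · simp [y, not_lt.mpr hki.le]
    · simp [hi]
  · simp [x]
  · simp [y]
  · rw [hN₂]
    refine ⟨?_, fun i hi => ?_, fun c hc => ?_⟩
    · simpa [N₂, x, vecMulVec_apply, hN₁col] using hpj
    · rcases hi.lt_or_gt with h | h
      · simp [N₂, x, vecMulVec_apply, hN₁col, h, div_mul_cancel₀ _ hpj]
      · simp [N₂, x, vecMulVec_apply, hN₁col, hbelow i h, not_lt.mpr h.le]
    · simp [N₂, x, vecMulVec_apply, hN₁row c hc]
  · rintro p' j' hj' h'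
    have hp' : p' ≠ p := fun h => hpj (h ▸ h'.2.2 j hj'.symm)
    have h₁ : N₁.IsIsolatedEntry p' j' :=
      h'.sub_vecMulVec (h'.2.2 j hj'.symm) (by simp [y, h'.2.1 p hp'.symm])
    rw [hN₂]
    exact h₁.sub_vecMulVec (by simp [x, h'.2.2 j hj'.symm]) (h₁.2.1 p hp'.symm)

theorem exists_apply_ne_zero_of_isUnit [CommRing R] [Nontrivial R] {M : Matrix ι ι R}
    (hM : IsUnit M) (j : ι) :
    ∃ p, M p j ≠ 0 ∧ ∀ i, p < i → M i j = 0 := by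
  classical
  obtain ⟨i, hi⟩ : ∃ i, M i j ≠ 0 := by
    by_contra! h
    exact (isUnit_iff_isUnit_det M |>.mp hM).ne_zero (det_eq_zero_of_column_eq_zero j h)
  obtain ⟨p, hp, hmax⟩ := (Finset.univ.filter (M · j ≠ 0)).exists_max_image id ⟨i, by simpa⟩
  exact ⟨p, (Finset.mem_filter.mp hp).2, fun i hi => by
    by_contra h
    exact (hmax i (by simpa)).not_gt hi⟩

theorem exists_forall_isIsolatedEntry_mul_mul (M : Matrix ι ι K) (hM : IsUnit M) :
    ∃ w v : Matrix ι ι K, w.IsUpperTriangular ∧ v.IsUpperTriangular ∧ IsUnit w ∧ IsUnit v ∧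
      ∀ j, ∃ p, (w * M * v).IsIsolatedEntry p j := by
  classical
  induction hk : (Finset.univ.filter fun j => ¬∃ p, M.IsIsolatedEntry p j).card
    using Nat.strong_induction_on generalizing M with
  | _ k ih =>
  by_cases hall : ∀ j, ∃ p, M.IsIsolatedEntry p j
  · exact ⟨1, 1, blockTriangular_one, blockTriangular_one, isUnit_one, isUnit_one,
      by simpa using hall⟩
  obtain ⟨j, hj, hjmin⟩ : ∃ j, (¬∃ p, M.IsIsolatedEntry p j) ∧
      ∀ c < j, ∃ p, M.IsIsolatedEntry p c := by
    obtain ⟨j₀, hj₀⟩ := not_forall.mp hall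
    obtain ⟨j, hj, hmin⟩ :=
      (Finset.univ.filter fun j => ¬∃ p, M.IsIsolatedEntry p j).exists_min_image id
        ⟨j₀, by simpa using hj₀⟩
    refine ⟨j, (Finset.mem_filter.mp hj).2, fun c hc => ?_⟩
    by_contra h
    exact (hmin c (by simpa using h)).not_gt hc
  obtain ⟨p, hpj, hbelow⟩ := exists_apply_ne_zero_of_isUnit hM j
  have hleft : ∀ c < j, M p c = 0 := fun c hc => by
    obtain ⟨p', h'⟩ := hjmin c hc
    exact h'.2.1 p fun hp => hpj (hp ▸ h'.2.2 j hc.ne')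
  obtain ⟨w, v, hw, hv, hwu, hvu, hpiv, hkeep⟩ :=
    exists_isIsolatedEntry_mul_mul M hpj hbelow hleft
  have hlt : (Finset.univ.filter fun c => ¬∃ p, (w * M * v).IsIsolatedEntry p c).card < k := by
    rw [← hk]
    refine Finset.card_lt_card ⟨fun c hc => ?_, fun hsub => ?_⟩
    · simp only [Finset.mem_filter, Finset.mem_univ, true_and] at hc ⊢
      rintro ⟨p', h'⟩
      obtain rfl | hcj := eq_or_ne c j
      · exact hj ⟨p', h'⟩
      · exact hc ⟨p', hkeep p' c hcj h'⟩
    · have hj' := hsub (Finset.mem_filter.mpr ⟨Finset.mem_univ j, hj⟩)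
      exact (Finset.mem_filter.mp hj').2 ⟨p, hpiv⟩
  obtain ⟨w', v', hw', hv', hwu', hvu', hall'⟩ :=
    ih _ hlt (w * M * v) ((hwu.mul hM).mul hvu) rfl
  exact ⟨w' * w, v * v', hw'.mul hw, hv.mul hv', hwu'.mul hwu, hvu.mul hvu',
    by simpa only [Matrix.mul_assoc] using hall'⟩

theorem exists_bruhat_decomposition (M : Matrix ι ι K) (hM : IsUnit M) :
    ∃ σ : Equiv.Perm ι, ∃ b₁ b₂ : Matrix ι ι K, IsUnit b₁ ∧ IsUnit b₂ ∧
      b₁.IsUpperTriangular ∧ b₂.IsUpperTriangular ∧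
      M = b₁ * (of fun i j => if i = σ j then 1 else 0) * b₂ := by
  obtain ⟨w, v, hw, hv, hwu, hvu, hiso⟩ := exists_forall_isIsolatedEntry_mul_mul M hM
  choose f hf using hiso
  have hinj : Function.Injective f := fun j j' h => by
    by_contra hne
    exact (hf j').1 (h ▸ (hf j).2.2 j' (Ne.symm hne))
  set σ := Equiv.ofBijective f hinj.bijective_of_finite
  set N := w * M * v
  set d : ι → K := fun j => N (σ j) j
  have hN : N = (of fun i j => if i = σ j then 1 else 0) * diagonal d := by
    ext i j
    rw [mul_diagonal, of_apply]
    split_ifs with h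
    · simp [d, h]
    · simpa using (hf j).2.1 i h
  have hd : IsUnit (diagonal d) :=
    isUnit_diagonal.mpr (Pi.isUnit_iff.mpr fun j => (hf j).1.isUnit)
  have := hwu.invertible
  have := hvu.invertible
  refine ⟨σ, w⁻¹, diagonal d * v⁻¹, isUnit_nonsing_inv_iff.mpr hwu,
    hd.mul (isUnit_nonsing_inv_iff.mpr hvu),
    blockTriangular_inv_of_blockTriangular hw,
    (blockTriangular_diagonal _).mul (blockTriangular_inv_of_blockTriangular hv), ?_⟩
  calc M = w⁻¹ * N * v⁻¹ := by simp [N, Matrix.mul_assoc]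
    _ = _ := by rw [hN]; simp only [Matrix.mul_assoc]

theorem apply_eq_zero_of_isBot [NonAssocSemiring R] {b₁ b₂ : Matrix ι ι R}
    (hb₁ : b₁.IsUpperTriangular) (hb₂ : b₂.IsUpperTriangular) {σ : Equiv.Perm ι} {j : ι}
    (hj : IsBot j) (hσ : σ j = j) {i : ι} (hi : i ≠ j) :
    (b₁ * (of fun a b => if a = σ b then (1 : R) else 0) * b₂) i j = 0 := by
  have hb₁ij : b₁ i j = 0 := hb₁ (lt_of_le_of_ne (hj i) hi.symm)
  rw [mul_apply, Finset.sum_eq_single j]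
  · simp [mul_apply, hσ, hb₁ij]
  · intro k _ hk
    rw [hb₂ (lt_of_le_of_ne (hj k) (Ne.symm hk)), mul_zero]
  · simp

end Bruhat

end Matrix

theorem boomerang_meets_bruhat_cell_moving_one {n : ℕ} (hn : 2 ≤ n)
    (Δ : Subgroup (Matrix.SpecialLinearGroup (Fin n) ℤ)) (hΔ : IsBoomerang Δ)
    (hnc : ¬ ∀ δ ∈ Δ, (δ : Matrix (Fin n) (Fin n) ℤ) = 1 ∨
      (δ : Matrix (Fin n) (Fin n) ℤ) = -1) :
    ∃ σ : Equiv.Perm (Fin n), σ ⟨0, by omega⟩ ≠ ⟨0, by omega⟩ ∧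
      ∃ δ ∈ Δ, ∃ b₁ b₂ : Matrix (Fin n) (Fin n) ℚ,
        IsUnit b₁ ∧ IsUnit b₂ ∧
        b₁.BlockTriangular id ∧ b₂.BlockTriangular id ∧
        ((δ : Matrix (Fin n) (Fin n) ℤ)).map (Int.cast : ℤ → ℚ) =
          b₁ * (Matrix.of fun i j : Fin n => if i = σ j then (1 : ℚ) else 0) * b₂ := by
  set z : Fin n := ⟨0, by omega⟩
  obtain ⟨δ, hδ, i, hiz, hi⟩ :=
    Matrix.SpecialLinearGroup.exists_mem_apply_ne_zero_of_isBoomerang hΔ hnc z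
  have hunit : IsUnit ((δ : Matrix (Fin n) (Fin n) ℤ).map (Int.cast : ℤ → ℚ)) := by
    simp [Matrix.isUnit_iff_isUnit_det, ← Int.cast_det]
  obtain ⟨σ, b₁, b₂, hb₁, hb₂, ht₁, ht₂, hδ_eq⟩ := Matrix.exists_bruhat_decomposition _ hunit
  refine ⟨σ, fun hσ => hi ?_, δ, hδ, b₁, b₂, hb₁, hb₂, ht₁, ht₂, hδ_eq⟩
  have h := congr_fun₂ hδ_eq i z
  rw [Matrix.apply_eq_zero_of_isBot ht₁ ht₂ (fun _ => Nat.zero_le _) hσ hiz] at h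
  simpa using h
end

section
/- Let N be a countable torsion-free nilpotent group and let Δ ≤ N be a nontrivial boomerang subgroup. Then Δ ∩ Z(N) is nontrivial, where Z(N) is the center of N. -/
/-!
If `Δ` avoided the center, let `δ ∈ Δ` lie in the lowest term `Z_{j+1}` of the upper central
series that `Δ` meets. For any `γ`, recurrence along `{H | δ ∈ H}` gives `n ≥ 1` with
`γ⁻ⁿ δ γⁿ ∈ Δ`; then `δ⁻¹ γ⁻ⁿ δ γⁿ` lies in `Δ ⊓ Z_j = ⊥`, so `γⁿ` commutes with `δ`. A nilpotent
group with torsion-free center has unique roots (induction over `G ⧸ center G`), so `γ` commutes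
with `δ` itself, and `δ` is central after all. For a noncommutative group, Mathlib's
`IsMulTorsionFree` (injectivity of every `a ↦ aⁿ`, `n ≠ 0`) is exactly this unique-roots property.
-/

open Subgroup
open scoped commutatorElement

section UniqueRoots

variable {G : Type*} [Group G]

theorem commutatorElement_pow_left_of_mem_center {g h : G} (hc : ⁅g, h⁆ ∈ center G) (n : ℕ) :
    ⁅g ^ n, h⁆ = ⁅g, h⁆ ^ n := by
  induction n with
  | zero => simp
  | succ n ih =>
    rw [pow_succ', commutatorElement_mul_left_eq_conj_mul, ih,
      mem_center_iff.mp (pow_mem hc n) g, mul_inv_cancel_right, pow_succ]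

open scoped IsMulCommutative in
theorem isMulTorsionFree_center_iff :
    IsMulTorsionFree (center G) ↔ ∀ z ∈ center G, ∀ n ≠ 0, z ^ n = 1 → z = 1 := by
  rw [isMulTorsionFree_iff_not_isOfFinOrder]
  refine ⟨fun h z hz n hn hzn => ?_, fun h z hz hfin => ?_⟩
  · by_contra hz1
    exact h (a := ⟨z, hz⟩) (by simpa using hz1)
      (isOfFinOrder_iff_pow_eq_one.mpr ⟨n, Nat.pos_of_ne_zero hn, Subtype.ext hzn⟩)
  · obtain ⟨n, hn, hzn⟩ := isOfFinOrder_iff_pow_eq_one.mp hfin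
    exact hz (Subtype.ext (h z z.2 n hn.ne' (congrArg Subtype.val hzn)))

theorem isMulTorsionFree_center_quotient_center [IsMulTorsionFree (center G)] :
    IsMulTorsionFree (center (G ⧸ center G)) := by
  rw [isMulTorsionFree_center_iff]
  rintro zq hzq n hn hzqn
  obtain ⟨z, rfl⟩ := QuotientGroup.mk_surjective zq
  have hzn : z ^ n ∈ center G := (QuotientGroup.eq_one_iff _).mp hzqn
  rw [QuotientGroup.eq_one_iff, mem_center_iff]
  intro y
  have hc : ⁅z, y⁆ ∈ center G := by
    rw [← QuotientGroup.eq_one_iff, ← QuotientGroup.mk'_apply, map_commutatorElement,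
      commutatorElement_eq_one_iff_commute]
    exact (mem_center_iff.mp hzq y).symm
  have hcn : ⁅z, y⁆ ^ n = 1 := by
    rw [← commutatorElement_pow_left_of_mem_center hc,
      commutatorElement_eq_one_iff_commute]
    exact (mem_center_iff.mp hzn y).symm
  exact (commutatorElement_eq_one_iff_mul_comm.mp
    (isMulTorsionFree_center_iff.mp ‹_› _ hc n hn hcn)).symm

theorem isMulTorsionFree_of_isMulTorsionFree_center [Group.IsNilpotent G]
    [IsMulTorsionFree (center G)] : IsMulTorsionFree G := by
  refine Group.nilpotent_center_quotient_ind
    (P := fun G _ _ => IsMulTorsionFree (center G) → IsMulTorsionFree G) G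
    (fun _ _ _ _ => inferInstance)
    (fun G _ _ ih hG => ⟨fun n hn a b (hab : a ^ n = b ^ n) => ?_⟩) ‹_›
  have := ih isMulTorsionFree_center_quotient_center
  have hmk : (a : G ⧸ center G) = b :=
    pow_left_injective hn (by simpa only [← QuotientGroup.mk_pow] using congrArg _ hab)
  obtain ⟨z, hz, rfl⟩ : ∃ z ∈ center G, b = a * z :=
    ⟨a⁻¹ * b, QuotientGroup.eq.mp hmk, (mul_inv_cancel_left a b).symm⟩
  have hcomm : Commute a z := mem_center_iff.mp hz a
  rw [hcomm.mul_pow, left_eq_mul] at hab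
  rw [isMulTorsionFree_center_iff.mp hG z hz n hn hab, mul_one]

theorem Commute.of_pow_left [IsMulTorsionFree G] {a b : G} {n : ℕ} (hn : n ≠ 0)
    (h : Commute (a ^ n) b) : Commute a b := by
  have hconj : (b * a * b⁻¹) ^ n = a ^ n := by rw [conj_pow, ← h.eq, mul_inv_cancel_right]
  exact (mul_inv_eq_iff_eq_mul.mp (pow_left_injective hn hconj)).symm

end UniqueRoots

section Boomerang

variable {G : Type*} [Group G]

theorem isOpen_setOf_mem_chabauty_s15 (g : G) :
    (chabautyTopology G).IsOpen {H : Subgroup G | g ∈ H} :=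
  ⟨{f | f g}, @Continuous.isOpen_preimage _ _ (Pi.topologicalSpace (t₂ := fun _ => ⊥)) ⊥ _
    (@continuous_apply G (fun _ => Prop) (fun _ => ⊥) g) {p | p} trivial, rfl⟩

theorem IsRecurrentDirection.exists_conj_pow_mem {γ g : G} {Δ : Subgroup G}
    (h : IsRecurrentDirection γ Δ) (hg : g ∈ Δ) : ∃ n ≠ 0, (γ ^ n)⁻¹ * g * γ ^ n ∈ Δ := by
  obtain ⟨n, hn, d, hd, hdg⟩ := h _ (isOpen_setOf_mem_chabauty_s15 g) hg
  refine ⟨n, Nat.one_le_iff_ne_zero.mp hn, ?_⟩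
  rw [← hdg, MulEquiv.coe_toMonoidHom, MulAut.conj_apply]
  convert SetLike.mem_coe.mp hd using 2
  group

theorem commute_of_conj_mem_of_inf_upperCentralSeries_eq_bot {Δ : Subgroup G} {j : ℕ}
    (hj : Δ ⊓ Subgroup.upperCentralSeries G j = ⊥) {δ g : G} (hδΔ : δ ∈ Δ)
    (hδ : δ ∈ Subgroup.upperCentralSeries G (j + 1)) (hg : g⁻¹ * δ * g ∈ Δ) : Commute g δ := by
  have hcomm : ⁅δ⁻¹, g⁻¹⁆ ∈ Δ ⊓ Subgroup.upperCentralSeries G j := by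
    refine mem_inf.mpr ⟨?_, Subgroup.mem_upperCentralSeries_succ_iff.mp (inv_mem hδ) g⁻¹⟩
    rw [show ⁅δ⁻¹, g⁻¹⁆ = δ⁻¹ * (g⁻¹ * δ * g) by rw [commutatorElement_def]; group]
    exact mul_mem (inv_mem hδΔ) hg
  rw [hj, mem_bot, commutatorElement_eq_one_iff_commute, Commute.inv_inv_iff] at hcomm
  exact hcomm.symm

theorem IsBoomerang.mem_center_of_mem_upperCentralSeries_succ [IsMulTorsionFree G]
    {Δ : Subgroup G} (hΔ : IsBoomerang Δ) {j : ℕ}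
    (hj : Δ ⊓ Subgroup.upperCentralSeries G j = ⊥) {δ : G} (hδΔ : δ ∈ Δ)
    (hδ : δ ∈ Subgroup.upperCentralSeries G (j + 1)) : δ ∈ center G := by
  refine mem_center_iff.mpr fun γ => ?_
  obtain ⟨n, hn, hconj⟩ := (hΔ γ).exists_conj_pow_mem hδΔ
  exact (commute_of_conj_mem_of_inf_upperCentralSeries_eq_bot hj hδΔ hδ hconj).of_pow_left hn

theorem IsBoomerang.inf_center_ne_bot [IsMulTorsionFree G] [Group.IsNilpotent G]
    {Δ : Subgroup G} (hΔ : IsBoomerang Δ) (hne : Δ ≠ ⊥) : Δ ⊓ center G ≠ ⊥ := by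
  intro hcenter
  have hbot (i : ℕ) : Δ ⊓ Subgroup.upperCentralSeries G i = ⊥ := by
    induction i with
    | zero => simp
    | succ j ih =>
      refine eq_bot_iff.mpr fun δ ⟨hδΔ, hδ⟩ => ?_
      rw [← hcenter]
      exact ⟨hδΔ, hΔ.mem_center_of_mem_upperCentralSeries_succ ih hδΔ hδ⟩
  obtain ⟨c, hc⟩ := Group.IsNilpotent.nilpotent (G := G)
  exact hne (by simpa [hc] using hbot c)

end Boomerang

theorem boomerang_meets_center_of_nilpotent_general {N : Type*} [Group N]
    (htf : ∀ g : N, g ≠ 1 → ¬IsOfFinOrder g) [Group.IsNilpotent N]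
    (Δ : Subgroup N) (hΔ : IsBoomerang Δ) (hne : Δ ≠ ⊥) :
    Δ ⊓ Subgroup.center N ≠ ⊥ := by
  have : IsMulTorsionFree (center N) := isMulTorsionFree_center_iff.mpr fun z _ n hn hzn =>
    by_contra fun hz => htf z hz (isOfFinOrder_iff_pow_eq_one.mpr ⟨n, Nat.pos_of_ne_zero hn, hzn⟩)
  have : IsMulTorsionFree N := isMulTorsionFree_of_isMulTorsionFree_center
  exact hΔ.inf_center_ne_bot hne

theorem boomerang_meets_center_of_nilpotent {N : Type*} [Group N] [Countable N]
    (htf : ∀ g : N, g ≠ 1 → ¬IsOfFinOrder g) [Group.IsNilpotent N]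
    (Δ : Subgroup N) (hΔ : IsBoomerang Δ) (hne : Δ ≠ ⊥) :
    Δ ⊓ Subgroup.center N ≠ ⊥ :=
  boomerang_meets_center_of_nilpotent_general htf Δ hΔ hne
end
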